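/- arXiv:math/0603425 — 2 statements merged into one kernel-verified Lean document; each statement's English description precedes it below -/
import Mathlib

section
/- Let π : U ↠ V be a small surjective morphism of local Artinian k-algebras with kernel I, let L_• be a complex of free R-modules, and suppose δ^V_• makes (L_• ⊗_k V, δ^V_•) a complex lifting (L_•, δ_•). Choose liftings δ̃^U_i : L_i ⊗_k U → L_{i−1} ⊗_k U of δ^V_i. Then for each i, the composition δ̃^U_{i−1} ∘ δ̃^U_i takes values in L_{i−2} ⊗_k I, and the induced family o = {o_i : L_i → L_{i−2} ⊗_k I} is a 2-cocycle in the Yoneda complex Hom^•_R(L_•,L_•) ⊗_k I. -/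
open TensorProduct IsLocalRing

/-- Let `π : U ↠ V` be a small surjective morphism of local Artinian
`k`-algebras with kernel `I`, let `(L_•, δ)` be a complex of free `R`-modules, let
`(L_• ⊗_k V, δ^V)` be a complex lifting `(L_•, δ)`, and let `δ̃^U_i` be arbitrary
(`R ⊗ U`)-linear liftings of `δ^V_i` (here expressed as `k`-linear maps which are
`U`-linear and `R`-linear, lift `δ^V` along `π`, and reduce to `δ` modulo `m_U`).
Then each composition `δ̃^U ∘ δ̃^U` takes values in `L ⊗_k I`, and the induced family
`o = {o_n : L_{n+2} → L_n ⊗_k I}` is a 2-cocycle in the Yoneda complex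
`Hom^•_R(L_•,L_•) ⊗_k I`, i.e. `(δ ⊗ id_I) ∘ o = o ∘ δ`. -/
theorem obstruction_is_two_cocycle
    {k : Type*} [Field k] {R : Type*} [CommRing R] [Algebra k R]
    {U V : Type*} [CommRing U] [Algebra k U] [IsLocalRing U] [IsArtinianRing U]
    [CommRing V] [Algebra k V] [IsLocalRing V] [IsArtinianRing V]
    (π : U →ₐ[k] V) (hπ : Function.Surjective π)
    (hsmall : RingHom.ker (π : U →+* V) * maximalIdeal U = ⊥)
    (L : ℕ → Type*) [∀ n, AddCommGroup (L n)] [∀ n, Module k (L n)]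
    [∀ n, Module R (L n)] [∀ n, IsScalarTower k R (L n)] [∀ n, SMulCommClass k R (L n)]
    [∀ n, Module.Free R (L n)]
    (δ : ∀ n, L (n + 1) →ₗ[R] L n)
    (hδ : ∀ n, (δ n).comp (δ (n + 1)) = 0)
    (δV : ∀ n, (L (n + 1) ⊗[k] V) →ₗ[k] (L n ⊗[k] V))
    (hδV : ∀ n, (δV n).comp (δV (n + 1)) = 0)
    (δU : ∀ n, (L (n + 1) ⊗[k] U) →ₗ[k] (L n ⊗[k] U))
    -- `δU` is `U`-linear:
    (hUlin : ∀ (n : ℕ) (u : U) (x : L (n + 1) ⊗[k] U),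
      δU n (LinearMap.lTensor (L (n + 1)) (LinearMap.mulLeft k u) x)
        = LinearMap.lTensor (L n) (LinearMap.mulLeft k u) (δU n x))
    -- `δU` is `R`-linear:
    (hRlin : ∀ (n : ℕ) (r : R) (x : L (n + 1) ⊗[k] U), δU n (r • x) = r • δU n x)
    -- `δU` lifts `δV` along `π`:
    (hlift : ∀ (n : ℕ) (x : L (n + 1) ⊗[k] U),
      LinearMap.lTensor (L n) π.toLinearMap (δU n x)
        = δV n (LinearMap.lTensor (L (n + 1)) π.toLinearMap x))
    -- `δU` reduces to `δ` modulo `m_U`: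
    (hmod : ∀ (n : ℕ) (x : L (n + 1)),
      δU n (x ⊗ₜ 1) - (δ n x) ⊗ₜ 1 ∈
        LinearMap.range (LinearMap.lTensor (L n)
          (((maximalIdeal U).restrictScalars k).subtype))) :
    (∀ n : ℕ, LinearMap.range ((δU n).comp (δU (n + 1))) ≤
        LinearMap.range (LinearMap.lTensor (L n)
          (((RingHom.ker (π : U →+* V)).restrictScalars k).subtype))) ∧
    ∃ o : ∀ n : ℕ, L (n + 2) →ₗ[R] (L n ⊗[k] ↥((RingHom.ker (π : U →+* V)).restrictScalars k)),
      (∀ (n : ℕ) (x : L (n + 2)),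
        LinearMap.lTensor (L n) (((RingHom.ker (π : U →+* V)).restrictScalars k).subtype)
          (o n x) = δU n (δU (n + 1) (x ⊗ₜ 1))) ∧
      (∀ (n : ℕ) (x : L (n + 3)),
        LinearMap.rTensor (↥((RingHom.ker (π : U →+* V)).restrictScalars k))
          ((δ n).restrictScalars k) (o (n + 1) x) = o n (δ (n + 2) x)) := by
  set I : Submodule k U := (RingHom.ker (π : U →+* V)).restrictScalars k with hIdef
  set mU : Submodule k U := (maximalIdeal U).restrictScalars k with hmdef
  -- smallness
  have hsm : ∀ i ∈ I, ∀ a ∈ mU, i * a = 0 := by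
    intro i hi a ha
    have : i * a ∈ RingHom.ker (π : U →+* V) * maximalIdeal U :=
      Ideal.mul_mem_mul hi ha
    rw [hsmall] at this
    simpa using this
  -- kill lemma
  have kill : ∀ (n : ℕ) (a : U) (S : Submodule k U), (∀ b ∈ S, a * b = 0) →
      ∀ w : L n ⊗[k] ↥S,
        LinearMap.lTensor (L n) (LinearMap.mulLeft k a)
          (LinearMap.lTensor (L n) S.subtype w) = 0 := by
    intro n a S hS w
    induction w using TensorProduct.induction_on with
    | zero => simp
    | add x y hx hy => simp [map_add, hx, hy]
    | tmul y b =>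
      simp only [LinearMap.lTensor_tmul, Submodule.subtype_apply, LinearMap.mulLeft_apply]
      rw [hS b b.2, tmul_zero]
  -- injectivity of L n ⊗ I → L n ⊗ U
  have hinj : ∀ n, Function.Injective (LinearMap.lTensor (L n) I.subtype) := fun n =>
    Module.Flat.lTensor_preserves_injective_linearMap _ (Submodule.injective_subtype I)
  -- exactness
  have hexact : Function.Exact (I.subtype) (π.toLinearMap : U →ₗ[k] V) := by
    rw [LinearMap.exact_iff]
    ext u
    simp [hIdef, RingHom.mem_ker]
  have htex : ∀ n, Function.Exact (LinearMap.lTensor (L n) I.subtype)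
      (LinearMap.lTensor (L n) π.toLinearMap) := fun n =>
    Module.Flat.lTensor_exact (L n) hexact
  -- range of δU ∘ δU
  have hrange : ∀ (n : ℕ) (x : L (n + 2) ⊗[k] U),
      δU n (δU (n + 1) x) ∈ LinearMap.range (LinearMap.lTensor (L n) I.subtype) := by
    intro n x
    have h0 : LinearMap.lTensor (L n) π.toLinearMap (δU n (δU (n + 1) x)) = 0 := by
      rw [hlift, hlift]
      have := congrArg (fun f => f (LinearMap.lTensor (L (n + 2)) π.toLinearMap x)) (hδV n)
      simpa using this
    obtain ⟨z, hz⟩ := (htex n _).mp h0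
    exact ⟨z, hz⟩
  -- Lemma A: δU acts as δ ⊗ id on L ⊗ I
  have lemA : ∀ (n : ℕ) (z : L (n + 1) ⊗[k] ↥I),
      δU n (LinearMap.lTensor (L (n + 1)) I.subtype z)
        = LinearMap.lTensor (L n) I.subtype
            (LinearMap.rTensor ↥I ((δ n).restrictScalars k) z) := by
    intro n z
    induction z using TensorProduct.induction_on with
    | zero => simp
    | add x y hx hy => simp [map_add, hx, hy]
    | tmul y i =>
      have h1 : (y ⊗ₜ[k] (i : U) : L (n + 1) ⊗[k] U)
          = LinearMap.lTensor (L (n + 1)) (LinearMap.mulLeft k (i : U)) (y ⊗ₜ 1) := by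
        simp
      rw [LinearMap.lTensor_tmul, Submodule.subtype_apply, h1, hUlin]
      obtain ⟨d, hd⟩ := hmod n y
      have hδU1 : δU n (y ⊗ₜ 1) = (δ n y) ⊗ₜ 1 + LinearMap.lTensor (L n) mU.subtype d := by
        rw [hd]; abel
      rw [hδU1, map_add, kill n (i : U) mU (fun b hb => hsm i i.2 b hb) d, add_zero]
      simp
  -- Lemma B: δU ∘ δU kills L ⊗ m
  have lemB : ∀ (n : ℕ) (w : L (n + 2) ⊗[k] ↥mU),
      δU n (δU (n + 1) (LinearMap.lTensor (L (n + 2)) mU.subtype w)) = 0 := by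
    intro n w
    induction w using TensorProduct.induction_on with
    | zero => simp
    | add x y hx hy => simp [map_add, hx, hy]
    | tmul y a =>
      have h1 : (y ⊗ₜ[k] (a : U) : L (n + 2) ⊗[k] U)
          = LinearMap.lTensor (L (n + 2)) (LinearMap.mulLeft k (a : U)) (y ⊗ₜ 1) := by
        simp
      rw [LinearMap.lTensor_tmul, Submodule.subtype_apply, h1, hUlin, hUlin]
      obtain ⟨z, hz⟩ := hrange n (y ⊗ₜ 1)
      rw [← hz]
      exact kill n (a : U) I (fun b hb => by rw [mul_comm]; exact hsm b hb a a.2) z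
  -- f n : R-linear map x ↦ δU (δU (x ⊗ 1))
  let f : ∀ n : ℕ, L (n + 2) →ₗ[R] (L n ⊗[k] U) := fun n =>
    { toFun := fun x => δU n (δU (n + 1) (x ⊗ₜ 1))
      map_add' := by
        intro x y
        show δU n (δU (n + 1) ((x + y) ⊗ₜ 1)) = δU n (δU (n + 1) (x ⊗ₜ 1)) + δU n (δU (n + 1) (y ⊗ₜ 1))
        rw [add_tmul, map_add, map_add]
      map_smul' := by
        intro r x
        show δU n (δU (n + 1) ((r • x) ⊗ₜ 1)) = r • δU n (δU (n + 1) (x ⊗ₜ 1))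
        rw [← TensorProduct.smul_tmul', hRlin, hRlin] }
  -- J n : R-linear version of lTensor subtype
  let J : ∀ n : ℕ, (L n ⊗[k] ↥I) →ₗ[R] (L n ⊗[k] U) := fun n =>
    { toFun := LinearMap.lTensor (L n) I.subtype
      map_add' := map_add _
      map_smul' := by
        intro r z
        show LinearMap.lTensor (L n) I.subtype (r • z) = r • LinearMap.lTensor (L n) I.subtype z
        induction z using TensorProduct.induction_on with
        | zero => simp
        | add x y hx hy => rw [smul_add, map_add, map_add, hx, hy, smul_add]
        | tmul y i => simp [TensorProduct.smul_tmul'] }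
  have hJinj : ∀ n, Function.Injective (J n) := fun n => hinj n
  have hfmem : ∀ (n : ℕ) (x : L (n + 2)), f n x ∈ LinearMap.range (J n) := by
    intro n x
    obtain ⟨z, hz⟩ := hrange n (x ⊗ₜ 1)
    exact ⟨z, hz⟩
  let e : ∀ n : ℕ, (L n ⊗[k] ↥I) ≃ₗ[R] LinearMap.range (J n) := fun n =>
    LinearEquiv.ofInjective (J n) (hJinj n)
  let o : ∀ n : ℕ, L (n + 2) →ₗ[R] (L n ⊗[k] ↥I) := fun n =>
    (e n).symm.toLinearMap ∘ₗ (f n).codRestrict (LinearMap.range (J n)) (hfmem n)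
  have hJo : ∀ (n : ℕ) (x : L (n + 2)), J n (o n x) = f n x := by
    intro n x
    have h2 : e n (o n x) = ⟨f n x, hfmem n x⟩ :=
      (e n).apply_symm_apply ⟨f n x, hfmem n x⟩
    have h1 := congrArg Subtype.val h2
    rwa [LinearEquiv.ofInjective_apply] at h1
  refine ⟨?_, o, ?_, ?_⟩
  · rintro n y ⟨x, rfl⟩
    exact hrange n x
  · intro n x
    exact hJo n x
  · intro n x
    apply hinj n
    rw [← lemA n]
    show _ = J n (o n (δ (n + 2) x))
    rw [hJo]
    show δU n (J (n + 1) (o (n + 1) x)) = f n (δ (n + 2) x)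
    rw [hJo]
    show δU n (δU (n + 1) (δU (n + 2) (x ⊗ₜ 1))) = δU n (δU (n + 1) ((δ (n + 2) x) ⊗ₜ 1))
    obtain ⟨d, hd⟩ := hmod (n + 2) x
    have h3 : δU (n + 2) (x ⊗ₜ 1)
        = (δ (n + 2) x) ⊗ₜ 1 + LinearMap.lTensor (L (n + 2)) mU.subtype d := by
      rw [hd]; abel
    rw [h3, map_add, map_add, lemB n d, add_zero]
end

section
/- Let π : U ↠ V be a small morphism of local Artinian k-algebras with kernel I, let (L_•, δ) be a complex of free R-modules, and suppose (L_• ⊗ U, δ^{U,1}) and (L_• ⊗ U, δ^{U,2}) are two liftings of the same complex (L_• ⊗ V, δ^V). Then for each i the difference η_i = δ_i^{U,1} − δ_i^{U,2} maps L_i into L_{i−1} ⊗_k I, and η = {η_i} is a 1-cocycle in Hom^•_R(L_•, L_•) ⊗_k I. -/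
open TensorProduct IsLocalRing

section Aux

variable {k : Type*} [Field k]

/-- If `u * s = 0` for all `s ∈ S`, then multiplication by `u` kills `M ⊗ S` inside `M ⊗ U`. -/
private lemma aux_mulLeft_kill {U M : Type*} [CommRing U] [Algebra k U]
    [AddCommGroup M] [Module k M] (S : Submodule k U) (u : U)
    (h : ∀ s ∈ S, u * s = 0) (z : M ⊗[k] S) :
    LinearMap.lTensor M (LinearMap.mulLeft k u) (LinearMap.lTensor M S.subtype z) = 0 := by
  induction z using TensorProduct.induction_on with
  | zero => simp
  | tmul m s => simp [h s s.2]
  | add x y hx hy => simp [hx, hy]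

/-- `lTensor` commutes with the `R`-action coming from the left factor. -/
private lemma aux_lTensor_smul {R M N P : Type*}
    [CommRing R] [AddCommGroup M] [Module k M] [Module R M] [SMulCommClass k R M]
    [AddCommGroup N] [Module k N] [AddCommGroup P] [Module k P]
    (f : N →ₗ[k] P) (r : R) (z : M ⊗[k] N) :
    LinearMap.lTensor M f (r • z) = r • LinearMap.lTensor M f z := by
  induction z using TensorProduct.induction_on with
  | zero => simp
  | tmul m n => simp [TensorProduct.smul_tmul']
  | add x y hx hy => simp [smul_add, hx, hy]

/-- `rTensor` and `lTensor` commute. -/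
private lemma aux_rT_lT_comm {M M' N N' : Type*}
    [AddCommGroup M] [Module k M] [AddCommGroup M'] [Module k M']
    [AddCommGroup N] [Module k N] [AddCommGroup N'] [Module k N']
    (f : M →ₗ[k] M') (g : N →ₗ[k] N') (z : M ⊗[k] N) :
    LinearMap.rTensor N' f (LinearMap.lTensor M g z)
      = LinearMap.lTensor M' g (LinearMap.rTensor N f z) := by
  induction z using TensorProduct.induction_on with
  | zero => simp
  | tmul m n => simp
  | add x y hx hy => simp [hx, hy]

end Aux

set_option maxHeartbeats 1600000 in
/-- Let `π : U ↠ V` be a small morphism of local Artinian `k`-algebras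
with kernel `I`, `(L_•, δ)` a complex of free `R`-modules, and let
`(L_• ⊗ U, δ^{U,1})`, `(L_• ⊗ U, δ^{U,2})` be two liftings of the same complex
`(L_• ⊗ V, δ^V)` (each lifting `δ^V` along `π` and reducing to `δ` modulo `m_U`).
Then each difference `η_n = δ^{U,1}_n − δ^{U,2}_n` maps `L_n` into `L_{n−1} ⊗_k I`, and
`η = {η_n}` is a 1-cocycle in `Hom^•_R(L_•,L_•) ⊗_k I`:
`(δ ⊗ id_I) ∘ η + η ∘ δ = 0`. -/
theorem difference_of_liftings_is_one_cocycle
    {k : Type*} [Field k] {R : Type*} [CommRing R] [Algebra k R]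
    {U V : Type*} [CommRing U] [Algebra k U] [IsLocalRing U] [IsArtinianRing U]
    [CommRing V] [Algebra k V] [IsLocalRing V] [IsArtinianRing V]
    (π : U →ₐ[k] V) (hπ : Function.Surjective π)
    (hsmall : RingHom.ker (π : U →+* V) * maximalIdeal U = ⊥)
    (L : ℕ → Type*) [∀ n, AddCommGroup (L n)] [∀ n, Module k (L n)]
    [∀ n, Module R (L n)] [∀ n, IsScalarTower k R (L n)] [∀ n, SMulCommClass k R (L n)]
    [∀ n, Module.Free R (L n)]
    (δ : ∀ n, L (n + 1) →ₗ[R] L n)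
    (hδ : ∀ n, (δ n).comp (δ (n + 1)) = 0)
    (δV : ∀ n, (L (n + 1) ⊗[k] V) →ₗ[k] (L n ⊗[k] V))
    (δU1 δU2 : ∀ n, (L (n + 1) ⊗[k] U) →ₗ[k] (L n ⊗[k] U))
    -- both liftings are `U`-linear:
    (hUlin : ∀ (j : Fin 2) (n : ℕ) (u : U) (x : L (n + 1) ⊗[k] U),
      (if j = 0 then δU1 else δU2) n
          (LinearMap.lTensor (L (n + 1)) (LinearMap.mulLeft k u) x)
        = LinearMap.lTensor (L n) (LinearMap.mulLeft k u)
            ((if j = 0 then δU1 else δU2) n x))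
    -- both liftings are `R`-linear:
    (hRlin : ∀ (j : Fin 2) (n : ℕ) (r : R) (x : L (n + 1) ⊗[k] U),
      (if j = 0 then δU1 else δU2) n (r • x) = r • (if j = 0 then δU1 else δU2) n x)
    -- both are complexes lifting `δV` along `π`:
    (hcplx : ∀ (j : Fin 2) (n : ℕ),
      ((if j = 0 then δU1 else δU2) n).comp ((if j = 0 then δU1 else δU2) (n + 1)) = 0)
    (hlift : ∀ (j : Fin 2) (n : ℕ) (x : L (n + 1) ⊗[k] U),
      LinearMap.lTensor (L n) π.toLinearMap ((if j = 0 then δU1 else δU2) n x)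
        = δV n (LinearMap.lTensor (L (n + 1)) π.toLinearMap x))
    -- both reduce to `δ` modulo `m_U`:
    (hmod : ∀ (j : Fin 2) (n : ℕ) (x : L (n + 1)),
      (if j = 0 then δU1 else δU2) n (x ⊗ₜ 1) - (δ n x) ⊗ₜ 1 ∈
        LinearMap.range (LinearMap.lTensor (L n)
          (((maximalIdeal U).restrictScalars k).subtype))) :
    (∀ (n : ℕ) (x : L (n + 1)),
      δU1 n (x ⊗ₜ 1) - δU2 n (x ⊗ₜ 1) ∈
        LinearMap.range (LinearMap.lTensor (L n)
          (((RingHom.ker (π : U →+* V)).restrictScalars k).subtype))) ∧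
    ∃ η : ∀ n : ℕ, L (n + 1) →ₗ[R] (L n ⊗[k] ↥((RingHom.ker (π : U →+* V)).restrictScalars k)),
      (∀ (n : ℕ) (x : L (n + 1)),
        LinearMap.lTensor (L n) (((RingHom.ker (π : U →+* V)).restrictScalars k).subtype)
          (η n x) = δU1 n (x ⊗ₜ 1) - δU2 n (x ⊗ₜ 1)) ∧
      (∀ (n : ℕ) (x : L (n + 2)),
        LinearMap.rTensor (↥((RingHom.ker (π : U →+* V)).restrictScalars k))
          ((δ n).restrictScalars k) (η (n + 1) x) + η n (δ (n + 1) x) = 0) := by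
  classical
  -- specialize the `Fin 2`-indexed hypotheses
  have hUlin1 : ∀ (n : ℕ) (u : U) (x : L (n + 1) ⊗[k] U),
      δU1 n (LinearMap.lTensor (L (n + 1)) (LinearMap.mulLeft k u) x)
        = LinearMap.lTensor (L n) (LinearMap.mulLeft k u) (δU1 n x) := by
    intro n u x; have h := hUlin 0 n u x; rwa [if_pos rfl] at h
  have hUlin2 : ∀ (n : ℕ) (u : U) (x : L (n + 1) ⊗[k] U),
      δU2 n (LinearMap.lTensor (L (n + 1)) (LinearMap.mulLeft k u) x)
        = LinearMap.lTensor (L n) (LinearMap.mulLeft k u) (δU2 n x) := by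
    intro n u x; have h := hUlin 1 n u x; rwa [if_neg (by decide)] at h
  have hR1 : ∀ (n : ℕ) (r : R) (x : L (n + 1) ⊗[k] U),
      δU1 n (r • x) = r • δU1 n x := by
    intro n r x; have h := hRlin 0 n r x; rwa [if_pos rfl] at h
  have hR2 : ∀ (n : ℕ) (r : R) (x : L (n + 1) ⊗[k] U),
      δU2 n (r • x) = r • δU2 n x := by
    intro n r x; have h := hRlin 1 n r x; rwa [if_neg (by decide)] at h
  have hc1 : ∀ n, (δU1 n).comp (δU1 (n + 1)) = 0 := by
    intro n; have h := hcplx 0 n; rwa [if_pos rfl] at h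
  have hc2 : ∀ n, (δU2 n).comp (δU2 (n + 1)) = 0 := by
    intro n; have h := hcplx 1 n; rwa [if_neg (by decide)] at h
  have hl1 : ∀ (n : ℕ) (x : L (n + 1) ⊗[k] U),
      LinearMap.lTensor (L n) π.toLinearMap (δU1 n x)
        = δV n (LinearMap.lTensor (L (n + 1)) π.toLinearMap x) := by
    intro n x; have h := hlift 0 n x; rwa [if_pos rfl] at h
  have hl2 : ∀ (n : ℕ) (x : L (n + 1) ⊗[k] U),
      LinearMap.lTensor (L n) π.toLinearMap (δU2 n x)
        = δV n (LinearMap.lTensor (L (n + 1)) π.toLinearMap x) := by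
    intro n x; have h := hlift 1 n x; rwa [if_neg (by decide)] at h
  have hm1 : ∀ (n : ℕ) (x : L (n + 1)),
      δU1 n (x ⊗ₜ 1) - (δ n x) ⊗ₜ 1 ∈
        LinearMap.range (LinearMap.lTensor (L n)
          (((maximalIdeal U).restrictScalars k).subtype)) := by
    intro n x; have h := hmod 0 n x; rwa [if_pos rfl] at h
  have hm2 : ∀ (n : ℕ) (x : L (n + 1)),
      δU2 n (x ⊗ₜ 1) - (δ n x) ⊗ₜ 1 ∈
        LinearMap.range (LinearMap.lTensor (L n)
          (((maximalIdeal U).restrictScalars k).subtype)) := by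
    intro n x; have h := hmod 1 n x; rwa [if_neg (by decide)] at h
  -- exactness of `L n ⊗ I → L n ⊗ U → L n ⊗ V`
  have hπl : Function.Surjective (π.toLinearMap : U →ₗ[k] V) := hπ
  have hex : Function.Exact
      (⇑(((RingHom.ker (π : U →+* V)).restrictScalars k).subtype))
      (⇑(π.toLinearMap : U →ₗ[k] V)) := by
    intro y
    constructor
    · intro hy
      exact ⟨⟨y, hy⟩, rfl⟩
    · rintro ⟨⟨z, hz⟩, rfl⟩
      exact hz
  -- Part 1: the difference lands in `L n ⊗ I`
  have part1 : ∀ (n : ℕ) (x : L (n + 1)),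
      δU1 n (x ⊗ₜ 1) - δU2 n (x ⊗ₜ 1) ∈
        LinearMap.range (LinearMap.lTensor (L n)
          (((RingHom.ker (π : U →+* V)).restrictScalars k).subtype)) := by
    intro n x
    have hexact := lTensor_exact (L n) hex hπl
    have h0 : LinearMap.lTensor (L n) π.toLinearMap
        (δU1 n (x ⊗ₜ 1) - δU2 n (x ⊗ₜ 1)) = 0 := by
      rw [map_sub, hl1, hl2, sub_self]
    obtain ⟨w, hw⟩ := (hexact _).mp h0
    exact ⟨w, hw⟩
  refine ⟨part1, ?_⟩
  -- a `k`-linear retraction of the inclusion `I → U`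
  obtain ⟨p, hp⟩ := LinearMap.exists_leftInverse_of_injective
      (((RingHom.ker (π : U →+* V)).restrictScalars k).subtype)
      (Submodule.ker_subtype _)
  have hretract : ∀ (n : ℕ) (w : L n ⊗[k] ↥((RingHom.ker (π : U →+* V)).restrictScalars k)),
      LinearMap.lTensor (L n) p
        (LinearMap.lTensor (L n) (((RingHom.ker (π : U →+* V)).restrictScalars k).subtype) w)
        = w := by
    intro n w
    rw [← LinearMap.comp_apply, ← LinearMap.lTensor_comp, hp, LinearMap.lTensor_id,
      LinearMap.id_apply]
  -- products of elements of `I` with elements of `m_U` vanish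
  have hIm : ∀ (a : U), a ∈ RingHom.ker (π : U →+* V) →
      ∀ (t : U), t ∈ maximalIdeal U → a * t = 0 := by
    intro a ha t ht
    have h : a * t ∈ RingHom.ker (π : U →+* V) * maximalIdeal U :=
      Ideal.mul_mem_mul ha ht
    rw [hsmall] at h
    simpa using h
  -- Fact B: on `L ⊗ I` the liftings act as `δ ⊗ id_I`
  have factB : ∀ (j : Fin 2) (n : ℕ)
      (w : L (n + 1) ⊗[k] ↥((RingHom.ker (π : U →+* V)).restrictScalars k)),
      (if j = 0 then δU1 else δU2) n
          (LinearMap.lTensor (L (n + 1))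
            (((RingHom.ker (π : U →+* V)).restrictScalars k).subtype) w)
        = LinearMap.lTensor (L n)
            (((RingHom.ker (π : U →+* V)).restrictScalars k).subtype)
            (LinearMap.rTensor _ ((δ n).restrictScalars k) w) := by
    intro j n w
    induction w using TensorProduct.induction_on with
    | zero => simp
    | add x y hx hy => simp only [map_add, hx, hy]
    | tmul x a =>
      have h1 : LinearMap.lTensor (L (n + 1))
            (((RingHom.ker (π : U →+* V)).restrictScalars k).subtype) (x ⊗ₜ a)
          = LinearMap.lTensor (L (n + 1)) (LinearMap.mulLeft k (a : U)) (x ⊗ₜ 1) := by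
        simp
      rw [h1, hUlin j n]
      obtain ⟨w', hw'⟩ := hmod j n x
      have hδU : (if j = 0 then δU1 else δU2) n (x ⊗ₜ 1)
          = LinearMap.lTensor (L n) (((maximalIdeal U).restrictScalars k).subtype) w'
            + (δ n x) ⊗ₜ 1 := sub_eq_iff_eq_add.mp hw'.symm
      rw [hδU, map_add, aux_mulLeft_kill _ _ (fun s hs => hIm a a.2 s hs)]
      simp
  -- Fact C: the two liftings agree on `L ⊗ m_U`
  have factC : ∀ (n : ℕ) (w : L (n + 1) ⊗[k] ↥((maximalIdeal U).restrictScalars k)),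
      δU1 n (LinearMap.lTensor (L (n + 1)) (((maximalIdeal U).restrictScalars k).subtype) w)
        = δU2 n (LinearMap.lTensor (L (n + 1))
            (((maximalIdeal U).restrictScalars k).subtype) w) := by
    intro n w
    induction w using TensorProduct.induction_on with
    | zero => simp
    | add x y hx hy => simp only [map_add, hx, hy]
    | tmul x t =>
      have h1 : LinearMap.lTensor (L (n + 1))
            (((maximalIdeal U).restrictScalars k).subtype) (x ⊗ₜ t)
          = LinearMap.lTensor (L (n + 1)) (LinearMap.mulLeft k (t : U)) (x ⊗ₜ 1) := by
        simp
      rw [h1, hUlin1, hUlin2]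
      obtain ⟨w', hw'⟩ := part1 n x
      have : δU1 n (x ⊗ₜ 1) = LinearMap.lTensor (L n)
            (((RingHom.ker (π : U →+* V)).restrictScalars k).subtype) w'
          + δU2 n (x ⊗ₜ 1) := sub_eq_iff_eq_add.mp hw'.symm
      rw [this, map_add,
        aux_mulLeft_kill _ _ (fun s hs => mul_comm (t : U) s ▸ hIm s hs (t : U) t.2),
        zero_add]
  -- construct `η`
  refine ⟨fun n =>
    { toFun := fun x => LinearMap.lTensor (L n) p (δU1 n (x ⊗ₜ 1) - δU2 n (x ⊗ₜ 1))
      map_add' := by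
        intro x y
        simp only [TensorProduct.add_tmul, map_add, map_sub]
        abel
      map_smul' := by
        intro r x
        show LinearMap.lTensor (L n) p (δU1 n ((r • x) ⊗ₜ 1) - δU2 n ((r • x) ⊗ₜ 1))
          = r • LinearMap.lTensor (L n) p (δU1 n (x ⊗ₜ 1) - δU2 n (x ⊗ₜ 1))
        rw [← TensorProduct.smul_tmul', hR1, hR2, ← smul_sub, aux_lTensor_smul] }, ?_, ?_⟩
  · -- `η` represents the difference
    intro n x
    obtain ⟨w, hw⟩ := part1 n x
    show LinearMap.lTensor (L n) (((RingHom.ker (π : U →+* V)).restrictScalars k).subtype)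
      (LinearMap.lTensor (L n) p (δU1 n (x ⊗ₜ 1) - δU2 n (x ⊗ₜ 1))) = _
    rw [← hw, hretract]
  · -- the cocycle condition
    intro n x
    show LinearMap.rTensor _ ((δ n).restrictScalars k)
        (LinearMap.lTensor (L (n + 1)) p (δU1 (n + 1) (x ⊗ₜ 1) - δU2 (n + 1) (x ⊗ₜ 1)))
      + LinearMap.lTensor (L n) p
          (δU1 n ((δ (n + 1) x) ⊗ₜ 1) - δU2 n ((δ (n + 1) x) ⊗ₜ 1)) = 0
    rw [aux_rT_lT_comm, ← map_add]
    have key : LinearMap.rTensor U ((δ n).restrictScalars k)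
          (δU1 (n + 1) (x ⊗ₜ 1) - δU2 (n + 1) (x ⊗ₜ 1))
        + (δU1 n ((δ (n + 1) x) ⊗ₜ 1) - δU2 n ((δ (n + 1) x) ⊗ₜ 1)) = 0 := by
      obtain ⟨w, hw⟩ := part1 (n + 1) x
      -- term 1: the action on the difference is `δ ⊗ id`
      have t1 : LinearMap.rTensor U ((δ n).restrictScalars k)
            (δU1 (n + 1) (x ⊗ₜ 1) - δU2 (n + 1) (x ⊗ₜ 1))
          = δU1 n (δU1 (n + 1) (x ⊗ₜ 1) - δU2 (n + 1) (x ⊗ₜ 1)) := by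
        rw [← hw]
        have hB := factB 0 n w
        rw [if_pos rfl] at hB
        rw [hB, ← aux_rT_lT_comm]
      -- term 2: replace `δU2 (n+1) (x ⊗ 1)` by `δ (n+1) x ⊗ 1` in the difference
      obtain ⟨w2, hw2⟩ := hm2 (n + 1) x
      have hδU2 : δU2 (n + 1) (x ⊗ₜ 1)
          = LinearMap.lTensor (L (n + 1)) (((maximalIdeal U).restrictScalars k).subtype) w2
            + (δ (n + 1) x) ⊗ₜ 1 := sub_eq_iff_eq_add.mp hw2.symm
      have t2 : δU1 n (δU2 (n + 1) (x ⊗ₜ 1)) - δU2 n (δU2 (n + 1) (x ⊗ₜ 1))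
          = δU1 n ((δ (n + 1) x) ⊗ₜ 1) - δU2 n ((δ (n + 1) x) ⊗ₜ 1) := by
        rw [hδU2, map_add, map_add, factC]
        abel
      have hz1 : δU1 n (δU1 (n + 1) (x ⊗ₜ 1)) = 0 := by
        have := LinearMap.congr_fun (hc1 n) (x ⊗ₜ 1)
        simpa using this
      have hz2 : δU2 n (δU2 (n + 1) (x ⊗ₜ 1)) = 0 := by
        have := LinearMap.congr_fun (hc2 n) (x ⊗ₜ 1)
        simpa using this
      rw [t1, ← t2, map_sub, hz1, hz2]
      abel
    rw [key, map_zero]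
end
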